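/- arXiv:2005.13994 — 8 statements merged into one kernel-verified Lean document; each statement's English description precedes it below -/
import Mathlib

section
/- If S is a set of lattice points in ℤ × ℤ such that for any two distinct points (u₁,v₁), (u₂,v₂) in S we have gcd_k(u₂−u₁, v₂−v₁) = 1 (where gcd_k(m,n) = max{d ∈ ℕ : d ∣ m and d^k ∣ n}), then the cardinality of S is at most 2^(k+1). -/
/-- The degree-k greatest common divisor: the largest `d : ℕ` with `d ∣ a` and `d^k ∣ b`. -/
noncomputable def gcdk (k : ℕ) (a b : ℤ) : ℕ :=
  sSup {d : ℕ | (d : ℤ) ∣ a ∧ (d : ℤ) ^ k ∣ b}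

theorem stmt0 (k : ℕ) (hk : 1 ≤ k) (S : Finset (ℤ × ℤ))
    (hvis : ∀ p ∈ S, ∀ q ∈ S, p ≠ q → gcdk k (q.1 - p.1) (q.2 - p.2) = 1) :
    S.card ≤ 2 ^ (k + 1) := by
  haveI : NeZero (2 ^ k) := ⟨pow_ne_zero k two_ne_zero⟩
  set f : ℤ × ℤ → ZMod 2 × ZMod (2 ^ k) := fun p => ((p.1 : ZMod 2), (p.2 : ZMod (2 ^ k)))
  have hinj : Set.InjOn f S := by
    intro p hp q hq hfpq
    by_contra hne
    have h1 : (2 : ℤ) ∣ q.1 - p.1 := by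
      have := congrArg Prod.fst hfpq
      simp only [f] at this
      have : ((q.1 - p.1 : ℤ) : ZMod 2) = 0 := by push_cast [this]; ring
      exact_mod_cast (ZMod.intCast_zmod_eq_zero_iff_dvd _ 2).mp this
    have h2 : (2 : ℤ) ^ k ∣ q.2 - p.2 := by
      have := congrArg Prod.snd hfpq
      simp only [f] at this
      have h0 : ((q.2 - p.2 : ℤ) : ZMod (2 ^ k)) = 0 := by push_cast [this]; ring
      have := (ZMod.intCast_zmod_eq_zero_iff_dvd _ (2 ^ k)).mp h0
      exact_mod_cast this
    have hmem : 2 ∈ {d : ℕ | (d : ℤ) ∣ q.1 - p.1 ∧ (d : ℤ) ^ k ∣ q.2 - p.2} := by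
      exact ⟨by exact_mod_cast h1, by exact_mod_cast h2⟩
    have hbdd : BddAbove {d : ℕ | (d : ℤ) ∣ q.1 - p.1 ∧ (d : ℤ) ^ k ∣ q.2 - p.2} := by
      have hne0 : q.1 - p.1 ≠ 0 ∨ q.2 - p.2 ≠ 0 := by
        by_contra h
        push_neg at h
        exact hne (Prod.ext (sub_eq_zero.mp h.1).symm (sub_eq_zero.mp h.2).symm)
      rcases hne0 with h | h
      · refine ⟨(q.1 - p.1).natAbs, fun d hd => ?_⟩
        have : d ∣ (q.1 - p.1).natAbs := by simpa using Int.natAbs_dvd_natAbs.mpr hd.1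
        exact Nat.le_of_dvd (Int.natAbs_pos.mpr h) this
      · refine ⟨(q.2 - p.2).natAbs, fun d hd => ?_⟩
        have hdk : d ^ k ∣ (q.2 - p.2).natAbs := by
          have := Int.natAbs_dvd_natAbs.mpr hd.2
          rwa [Int.natAbs_pow, Int.natAbs_natCast] at this
        calc d ≤ d ^ k := Nat.le_self_pow (by omega) d
          _ ≤ (q.2 - p.2).natAbs := Nat.le_of_dvd (Int.natAbs_pos.mpr h) hdk
    have h2le : 2 ≤ gcdk k (q.1 - p.1) (q.2 - p.2) := le_csSup hbdd hmem
    rw [hvis p hp q hq hne] at h2le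
    omega
  have := Finset.card_le_card_of_injOn f (fun x _ => Finset.mem_univ (f x)) hinj
  calc S.card ≤ (Finset.univ : Finset (ZMod 2 × ZMod (2 ^ k))).card := this
    _ = 2 ^ (k + 1) := by
        simp [Finset.card_univ, ZMod.card, pow_succ, mul_comm]
end

section
/- For any positive integer k and integers a, b with a ≠ 0 and b ≠ 0, the following are equivalent: (i) gcd_k(a, b) = 1; (ii) there is no rational number t with 0 < t < 1 such that both t·a and t^k·b are integers. -/
lemma den_dvd_of_mul_int (t : ℚ) (a : ℤ) (z : ℤ) (hz : (z : ℚ) = t * a) :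
    (t.den : ℤ) ∣ a := by
  have hkey : z * (t.den : ℤ) = t.num * a := by
    have : ((z * t.den : ℤ) : ℚ) = ((t.num * a : ℤ) : ℚ) := by
      push_cast
      rw [hz]
      rw [mul_comm (t:ℚ) (a:ℚ), mul_assoc, Rat.mul_den_eq_num]
      ring
    exact_mod_cast this
  have hdvd : (t.den : ℤ) ∣ t.num * a := ⟨z, by linarith [hkey]⟩
  have hcop : IsCoprime (t.den : ℤ) t.num := by
    rw [Int.isCoprime_iff_gcd_eq_one]
    have : Int.gcd (t.den : ℤ) t.num = Nat.gcd t.den t.num.natAbs := by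
      simp [Int.gcd]
    rw [this]
    exact Nat.Coprime.gcd_eq_one t.reduced.symm
  exact hcop.dvd_of_dvd_mul_left hdvd

theorem stmt1 (k : ℕ) (hk : 1 ≤ k) (a b : ℤ) (ha : a ≠ 0) (hb : b ≠ 0) :
    gcdk k a b = 1 ↔
      ¬ ∃ t : ℚ, 0 < t ∧ t < 1 ∧ (∃ z : ℤ, (z : ℚ) = t * a) ∧ (∃ w : ℤ, (w : ℚ) = t ^ k * b) := by
  set S : Set ℕ := {d : ℕ | (d : ℤ) ∣ a ∧ (d : ℤ) ^ k ∣ b} with hS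
  have h1mem : 1 ∈ S := ⟨by simp, by simp⟩
  have hbdd : BddAbove S := by
    refine ⟨a.natAbs, fun d hd => ?_⟩
    have h : d ∣ a.natAbs := by
      have := Int.natAbs_dvd_natAbs.mpr hd.1
      simpa using this
    exact Nat.le_of_dvd (Int.natAbs_pos.mpr ha) h
  unfold gcdk
  constructor
  · rintro h1 ⟨t, ht0, ht1, ⟨z, hz⟩, ⟨w, hw⟩⟩
    have hden : (t.den : ℤ) ∣ a := den_dvd_of_mul_int t a z hz
    have hdenk : (t.den : ℤ) ^ k ∣ b := by
      have h2 := den_dvd_of_mul_int (t ^ k) b w hw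
      rw [Rat.den_pow] at h2
      exact_mod_cast h2
    have hle : t.den ≤ 1 := h1 ▸ le_csSup hbdd ⟨hden, hdenk⟩
    have hd1 : t.den = 1 := le_antisymm hle t.pos
    have : (t.num : ℚ) = t := Rat.den_eq_one_iff t |>.mp hd1
    rw [← this] at ht0 ht1
    have h0 : 0 < t.num := by exact_mod_cast ht0
    have h1' : t.num < 1 := by exact_mod_cast ht1
    omega
  · intro hnot
    refine le_antisymm (csSup_le ⟨1, h1mem⟩ fun d hd => ?_) (le_csSup hbdd h1mem)
    by_contra hd1
    push_neg at hd1
    have hd2 : 2 ≤ d := hd1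
    have hdpos : (0 : ℚ) < d := by positivity
    obtain ⟨c, hc⟩ := hd.1
    obtain ⟨e, he⟩ := hd.2
    refine hnot ⟨(d : ℚ)⁻¹, by positivity, ?_, ⟨c, ?_⟩, ⟨e, ?_⟩⟩
    · rw [inv_lt_one_iff₀]
      right
      exact_mod_cast hd2
    · have : (a : ℚ) = d * c := by exact_mod_cast congrArg (Int.cast : ℤ → ℚ) hc
      rw [this]
      field_simp
    · have : (b : ℚ) = (d : ℚ) ^ k * e := by exact_mod_cast congrArg (Int.cast : ℤ → ℚ) he
      rw [this, inv_pow]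
      field_simp
end

section
/- For any positive integer k and nonzero integers a, b, there exists exactly one rational number t with 0 < t < 1 such that t·a ∈ ℤ and t^k·b ∈ ℤ if and only if gcd_k(a, b) = 2. -/
def IsLatticeParam (k : ℕ) (a b : ℤ) (t : ℚ) : Prop :=
  0 < t ∧ t < 1 ∧ (∃ z : ℤ, (z : ℚ) = t * a) ∧ (∃ w : ℤ, (w : ℚ) = t ^ k * b)

lemma Rat.den_dvd_of_intCast_eq_mul {t : ℚ} {a z : ℤ} (h : (z : ℚ) = t * a) :
    (t.den : ℤ) ∣ a := by
  have hnum : (t.den : ℤ) ∣ t.num * a := by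
    refine ⟨z, ?_⟩
    have : (t.num : ℚ) * a = t.den * z := by
      rw [h, ← Rat.mul_den_eq_num]; ring
    exact_mod_cast this
  exact Int.dvd_of_dvd_mul_right_of_gcd_one hnum ((Int.gcd_comm _ _).trans t.reduced)

lemma Rat.two_le_den_of_pos_of_lt_one {t : ℚ} (h0 : 0 < t) (h1 : t < 1) : 2 ≤ t.den := by
  by_contra! h
  have hden : t.den = 1 := by have := t.den_pos; omega
  rw [Rat.den_eq_one_iff] at hden
  rw [← hden] at h0 h1
  have : 0 < t.num := by exact_mod_cast h0
  have : t.num < 1 := by exact_mod_cast h1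
  omega

lemma Rat.eq_one_half_of_den_eq_two {t : ℚ} (h0 : 0 < t) (h1 : t < 1) (hden : t.den = 2) :
    t = 1 / 2 := by
  obtain ⟨n, rfl⟩ : ∃ n : ℤ, t = n / 2 :=
    ⟨t.num, (Rat.num_div_den t).symm.trans (by rw [hden]; norm_num)⟩
  have : 0 < n := by exact_mod_cast (div_pos_iff_of_pos_right two_pos).1 h0
  have : n < 2 := by exact_mod_cast (div_lt_one two_pos).1 h1
  obtain rfl : n = 1 := by omega
  simp

section gcdk

variable {k : ℕ} {a b : ℤ}

lemma bddAbove_setOf_dvd (ha : a ≠ 0) :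
    BddAbove {d : ℕ | (d : ℤ) ∣ a ∧ (d : ℤ) ^ k ∣ b} :=
  ⟨a.natAbs, fun _ hd => Nat.le_of_dvd (Int.natAbs_pos.2 ha) (Int.natCast_dvd.1 hd.1)⟩

lemma le_gcdk (ha : a ≠ 0) {d : ℕ} (hd : (d : ℤ) ∣ a ∧ (d : ℤ) ^ k ∣ b) : d ≤ gcdk k a b :=
  le_csSup (bddAbove_setOf_dvd ha) hd

lemma gcdk_dvd (ha : a ≠ 0) : (gcdk k a b : ℤ) ∣ a ∧ (gcdk k a b : ℤ) ^ k ∣ b :=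
  Nat.sSup_mem ⟨1, by simp⟩ (bddAbove_setOf_dvd ha)

end gcdk

namespace IsLatticeParam

variable {k : ℕ} {a b : ℤ} {t : ℚ}

lemma den_dvd (h : IsLatticeParam k a b t) : (t.den : ℤ) ∣ a ∧ (t.den : ℤ) ^ k ∣ b := by
  obtain ⟨-, -, ⟨z, hz⟩, ⟨w, hw⟩⟩ := h
  refine ⟨Rat.den_dvd_of_intCast_eq_mul hz, ?_⟩
  simpa [Rat.den_pow] using Rat.den_dvd_of_intCast_eq_mul hw

lemma two_le_den (h : IsLatticeParam k a b t) : 2 ≤ t.den :=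
  Rat.two_le_den_of_pos_of_lt_one h.1 h.2.1

lemma den_le_gcdk (ha : a ≠ 0) (h : IsLatticeParam k a b t) : t.den ≤ gcdk k a b :=
  le_gcdk ha h.den_dvd

end IsLatticeParam

lemma isLatticeParam_div {k : ℕ} {a b : ℤ} {j d : ℕ} (hd : (d : ℤ) ∣ a ∧ (d : ℤ) ^ k ∣ b)
    (hj : 0 < j) (hjd : j < d) : IsLatticeParam k a b (j / d) := by
  obtain ⟨⟨c, rfl⟩, ⟨e, rfl⟩⟩ := hd
  have hd0 : (d : ℚ) ≠ 0 := Nat.cast_ne_zero.2 (by omega)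
  refine ⟨by positivity, (div_lt_one (by positivity)).2 (by exact_mod_cast hjd),
    ⟨j * c, ?_⟩, ⟨j ^ k * e, ?_⟩⟩
  · push_cast; field_simp
  · push_cast; rw [div_pow]; field_simp

theorem stmt2_general (k : ℕ) (a b : ℤ) (ha : a ≠ 0) :
    (∃! t : ℚ, 0 < t ∧ t < 1 ∧ (∃ z : ℤ, (z : ℚ) = t * a) ∧ (∃ w : ℤ, (w : ℚ) = t ^ k * b)) ↔
      gcdk k a b = 2 := by
  show (∃! t, IsLatticeParam k a b t) ↔ _
  constructor
  · rintro ⟨t, ht, huniq⟩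
    have hg : 2 ≤ gcdk k a b := ht.two_le_den.trans (ht.den_le_gcdk ha)
    have hfirst := huniq _ (isLatticeParam_div (gcdk_dvd ha) one_pos (by omega))
    have hlast := huniq _ (isLatticeParam_div (gcdk_dvd ha) (j := gcdk k a b - 1)
      (by omega) (by omega))
    have : ((gcdk k a b - 1 : ℕ) : ℚ) = (1 : ℕ) :=
      (div_left_inj' (Nat.cast_ne_zero.2 (by omega))).1 (hlast.trans hfirst.symm)
    have : gcdk k a b - 1 = 1 := by exact_mod_cast this
    omega
  · intro hg
    have hdvd := gcdk_dvd (k := k) (b := b) ha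
    rw [hg] at hdvd
    refine ⟨1 / 2, by simpa using isLatticeParam_div hdvd one_pos one_lt_two, fun t ht => ?_⟩
    exact Rat.eq_one_half_of_den_eq_two ht.1 ht.2.1
      (le_antisymm (hg ▸ ht.den_le_gcdk ha) ht.two_le_den)

theorem stmt2 (k : ℕ) (hk : 1 ≤ k) (a b : ℤ) (ha : a ≠ 0) (hb : b ≠ 0) :
    (∃! t : ℚ, 0 < t ∧ t < 1 ∧ (∃ z : ℤ, (z : ℚ) = t * a) ∧ (∃ w : ℤ, (w : ℚ) = t ^ k * b)) ↔
      gcdk k a b = 2 :=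
  stmt2_general k a b ha
end

section
/- Let k ≥ 1 and let d ∈ ℕ. For nonzero integers a, b, we have d ∣ gcd_k(a,b) if and only if d ∣ a and d^k ∣ b. -/
theorem Nat.dvd_sSup_iff_mem {S : Set ℕ} (hne : S.Nonempty) (hbdd : BddAbove S)
    (hdvd : ∀ d ∈ S, ∀ e, e ∣ d → e ∈ S) (hlcm : ∀ d ∈ S, ∀ e ∈ S, Nat.lcm d e ∈ S) {d : ℕ} :
    d ∣ sSup S ↔ d ∈ S := by
  have hmem : sSup S ∈ S := Nat.sSup_mem hne hbdd
  refine ⟨fun h => hdvd _ hmem d h, fun hd => ?_⟩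
  have hzero : 0 ∉ S := by
    obtain ⟨B, hB⟩ := hbdd
    intro h0
    have : B + 1 ≤ B := hB (hdvd 0 h0 (B + 1) (dvd_zero _))
    omega
  have hlcm_mem : Nat.lcm d (sSup S) ∈ S := hlcm _ hd _ hmem
  have hlcm_pos : 0 < Nat.lcm d (sSup S) :=
    Nat.pos_of_ne_zero fun h => hzero (h ▸ hlcm_mem)
  have hlcm_eq : Nat.lcm d (sSup S) = sSup S :=
    le_antisymm (le_csSup hbdd hlcm_mem) (Nat.le_of_dvd hlcm_pos (Nat.dvd_lcm_right _ _))
  exact hlcm_eq ▸ Nat.dvd_lcm_left _ _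

theorem natCast_dvd_and_pow_dvd_iff (k d : ℕ) (a b : ℤ) :
    (d : ℤ) ∣ a ∧ (d : ℤ) ^ k ∣ b ↔ d ∣ a.natAbs ∧ d ^ k ∣ b.natAbs := by
  rw [← Nat.cast_pow, Int.natCast_dvd, Int.natCast_dvd]

theorem gcdk_eq_sSup_natAbs (k : ℕ) (a b : ℤ) :
    gcdk k a b = sSup {d : ℕ | d ∣ a.natAbs ∧ d ^ k ∣ b.natAbs} := by
  simp only [gcdk, natCast_dvd_and_pow_dvd_iff]

theorem stmt3_general (k : ℕ) (d : ℕ) (a b : ℤ) (ha : a ≠ 0) :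
    d ∣ gcdk k a b ↔ (d : ℤ) ∣ a ∧ (d : ℤ) ^ k ∣ b := by
  rw [natCast_dvd_and_pow_dvd_iff, gcdk_eq_sSup_natAbs]
  refine Nat.dvd_sSup_iff_mem ⟨1, by simp⟩ ?_ ?_ ?_
  · exact ⟨a.natAbs, fun e he => Nat.le_of_dvd (Int.natAbs_pos.2 ha) he.1⟩
  · exact fun e he f hf => ⟨hf.trans he.1, (pow_dvd_pow_of_dvd hf k).trans he.2⟩
  · exact fun e he f hf => ⟨Nat.lcm_dvd he.1 hf.1, Nat.pow_lcm_pow ▸ Nat.lcm_dvd he.2 hf.2⟩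

theorem stmt3 (k : ℕ) (hk : 1 ≤ k) (d : ℕ) (a b : ℤ) (ha : a ≠ 0) (hb : b ≠ 0) :
    d ∣ gcdk k a b ↔ (d : ℤ) ∣ a ∧ (d : ℤ) ^ k ∣ b :=
  stmt3_general k d a b ha
end

section
/- Let k ≥ 1 and suppose (u₁,v₁), (u₂,v₂) are lattice points with gcd_k(u₂−u₁, v₂−v₁) = 1. If (m,n) is a lattice point with gcd_k(m−u₁, n−v₁) = 2 and gcd_k(m−u₂, n−v₂) = 2, then a contradiction follows; i.e., for a pairwise k-visible set S, any lattice point (m,n) satisfies gcd_k(m−u, n−v) = 2 for at most one point (u,v) ∈ S. -/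
lemma gcdk_bdd (k : ℕ) (a b : ℤ) (ha : a ≠ 0) :
    BddAbove {d : ℕ | (d : ℤ) ∣ a ∧ (d : ℤ) ^ k ∣ b} := by
  refine ⟨a.natAbs, fun d hd => ?_⟩
  have h : ((d : ℤ)).natAbs ∣ a.natAbs := Int.natAbs_dvd_natAbs.2 hd.1
  simpa using Nat.le_of_dvd (Int.natAbs_pos.2 ha) h

lemma gcdk_mem (k : ℕ) (a b : ℤ) (ha : a ≠ 0) :
    (gcdk k a b : ℤ) ∣ a ∧ ((gcdk k a b : ℤ)) ^ k ∣ b := by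
  have : gcdk k a b ∈ {d : ℕ | (d : ℤ) ∣ a ∧ (d : ℤ) ^ k ∣ b} :=
    Nat.sSup_mem ⟨1, by simp⟩ (gcdk_bdd k a b ha)
  exact this

theorem stmt4 (k : ℕ) (hk : 1 ≤ k) (u₁ v₁ u₂ v₂ m n : ℤ)
    (hne : (u₁, v₁) ≠ (u₂, v₂))
    (h₁₂ : u₂ - u₁ ≠ 0) (h₁₂' : v₂ - v₁ ≠ 0)
    (hm₁ : m - u₁ ≠ 0) (hn₁ : n - v₁ ≠ 0) (hm₂ : m - u₂ ≠ 0) (hn₂ : n - v₂ ≠ 0)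
    (hvis : gcdk k (u₂ - u₁) (v₂ - v₁) = 1)
    (h1 : gcdk k (m - u₁) (n - v₁) = 2)
    (h2 : gcdk k (m - u₂) (n - v₂) = 2) :
    False := by
  have H1 := gcdk_mem k (m - u₁) (n - v₁) hm₁
  have H2 := gcdk_mem k (m - u₂) (n - v₂) hm₂
  rw [h1] at H1
  rw [h2] at H2
  have hda : (2 : ℤ) ∣ (u₂ - u₁) := by
    have := H1.1.sub H2.1
    have e : (m - u₁) - (m - u₂) = u₂ - u₁ := by ring
    rwa [e] at this
  have hdb : ((2 : ℕ) : ℤ) ^ k ∣ (v₂ - v₁) := by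
    have := H1.2.sub H2.2
    have e : (n - v₁) - (n - v₂) = v₂ - v₁ := by ring
    push_cast
    rwa [e] at this
  have hmem : (2 : ℕ) ∈ {d : ℕ | (d : ℤ) ∣ (u₂ - u₁) ∧ (d : ℤ) ^ k ∣ (v₂ - v₁)} := by
    constructor <;> [exact_mod_cast hda; exact_mod_cast hdb]
  have : (2 : ℕ) ≤ gcdk k (u₂ - u₁) (v₂ - v₁) :=
    le_csSup (gcdk_bdd k (u₂ - u₁) (v₂ - v₁) h₁₂) hmem
  omega
end

section
/- Let k ≥ 1 and let (u₁,v₁), (u₂,v₂) be lattice points with gcd_k(u₂−u₁, v₂−v₁) = 1. If d₁, d₂ are squarefree positive integers such that there exists a lattice point (m,n) with d₁ ∣ m−u₁, d₁^k ∣ n−v₁, d₂ ∣ m−u₂, and d₂^k ∣ n−v₂, then gcd(d₁, d₂) = 1. -/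
theorem stmt5 (k : ℕ) (hk : 1 ≤ k) (u₁ v₁ u₂ v₂ : ℤ)
    (h₁₂ : u₂ - u₁ ≠ 0) (h₁₂' : v₂ - v₁ ≠ 0)
    (hvis : gcdk k (u₂ - u₁) (v₂ - v₁) = 1)
    (d₁ d₂ : ℕ) (hd₁ : 0 < d₁) (hd₂ : 0 < d₂)
    (hsf₁ : Squarefree d₁) (hsf₂ : Squarefree d₂)
    (hex : ∃ m n : ℤ, (d₁ : ℤ) ∣ m - u₁ ∧ (d₁ : ℤ) ^ k ∣ n - v₁ ∧
      (d₂ : ℤ) ∣ m - u₂ ∧ (d₂ : ℤ) ^ k ∣ n - v₂) :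
    Nat.gcd d₁ d₂ = 1 := by
  obtain ⟨m, n, h1, h2, h3, h4⟩ := hex
  set g := Nat.gcd d₁ d₂ with hg
  have hgd1 : (g : ℤ) ∣ (d₁ : ℤ) := Int.natCast_dvd_natCast.mpr (Nat.gcd_dvd_left _ _)
  have hgd2 : (g : ℤ) ∣ (d₂ : ℤ) := Int.natCast_dvd_natCast.mpr (Nat.gcd_dvd_right _ _)
  have hga : (g : ℤ) ∣ u₂ - u₁ := by
    have := (hgd1.trans h1).sub (hgd2.trans h3)
    simpa using this
  have hgb : (g : ℤ) ^ k ∣ v₂ - v₁ := by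
    have := ((pow_dvd_pow_of_dvd hgd1 k).trans h2).sub
      ((pow_dvd_pow_of_dvd hgd2 k).trans h4)
    simpa using this
  have hmem : g ∈ {d : ℕ | (d : ℤ) ∣ u₂ - u₁ ∧ (d : ℤ) ^ k ∣ v₂ - v₁} := ⟨hga, hgb⟩
  have hbdd : BddAbove {d : ℕ | (d : ℤ) ∣ u₂ - u₁ ∧ (d : ℤ) ^ k ∣ v₂ - v₁} := by
    refine ⟨(u₂ - u₁).natAbs, fun d hd => ?_⟩
    have hdvd : d ∣ (u₂ - u₁).natAbs := Int.natCast_dvd_natCast.mp (by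
      simpa [Int.natAbs_dvd] using hd.1)
    exact Nat.le_of_dvd (Int.natAbs_pos.mpr h₁₂) hdvd
  have hle : g ≤ gcdk k (u₂ - u₁) (v₂ - v₁) := le_csSup hbdd hmem
  rw [hvis] at hle
  have : 1 ≤ g := Nat.one_le_iff_ne_zero.mpr (Nat.gcd_ne_zero_left hd₁.ne')
  omega
end

section
/- Fix k ≥ 2. The number of lattice points (m,n) with 1 ≤ m,n ≤ x satisfying gcd_k(m,n) = 1 equals x²/ζ(k+1) + O_k(x log x), where ζ is the Riemann zeta function. -/
open Finset
open scoped ArithmeticFunction.Moebius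

lemma gcdk_natCast (k m n : ℕ) : gcdk k m n = sSup {d : ℕ | d ∣ m ∧ d ^ k ∣ n} := by
  simp only [gcdk, ← Nat.cast_pow, Int.natCast_dvd_natCast]

lemma dvd_gcdk_iff {k m n d : ℕ} (hm : m ≠ 0) : d ∣ gcdk k m n ↔ d ∣ m ∧ d ^ k ∣ n := by
  rw [gcdk_natCast]
  set D := {d : ℕ | d ∣ m ∧ d ^ k ∣ n}
  have hbdd : BddAbove D := ⟨m, fun d hd => Nat.le_of_dvd (Nat.pos_of_ne_zero hm) hd.1⟩
  obtain ⟨hgm, hgn⟩ : sSup D ∈ D := Nat.sSup_mem ⟨1, by simp [D]⟩ hbdd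
  refine ⟨fun hd => ⟨hd.trans hgm, (pow_dvd_pow_of_dvd hd k).trans hgn⟩, fun hd => ?_⟩
  -- `D` is closed under `lcm`, so its maximum is a multiple of each of its elements.
  have hlcm : Nat.lcm d (sSup D) ∈ D :=
    ⟨Nat.lcm_dvd hd.1 hgm, Nat.pow_lcm_pow.symm ▸ Nat.lcm_dvd hd.2 hgn⟩
  have hpos : 0 < Nat.lcm d (sSup D) :=
    Nat.pos_of_ne_zero <| Nat.lcm_ne_zero (ne_zero_of_dvd_ne_zero hm hd.1)
      (ne_zero_of_dvd_ne_zero hm hgm)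
  have heq : Nat.lcm d (sSup D) = sSup D :=
    le_antisymm (le_csSup hbdd hlcm) (Nat.le_of_dvd hpos (Nat.dvd_lcm_right _ _))
  exact heq ▸ Nat.dvd_lcm_left _ _

lemma sum_divisors_moebius (n : ℕ) : ∑ d ∈ n.divisors, μ d = if n = 1 then 1 else 0 := by
  rw [← ArithmeticFunction.coe_mul_zeta_apply, ArithmeticFunction.moebius_mul_coe_zeta,
    ArithmeticFunction.one_apply]

lemma sum_Icc_moebius_eq_ite_gcdk_eq_one (k N : ℕ) {m : ℕ} (hm : m ∈ Icc 1 N) (n : ℕ) :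
    ∑ d ∈ Icc 1 N, (if d ∣ m ∧ d ^ k ∣ n then μ d else 0)
      = if gcdk k m n = 1 then 1 else 0 := by
  rw [mem_Icc] at hm
  have hm0 : m ≠ 0 := by omega
  have hdiv : {d ∈ Icc 1 N | d ∣ m ∧ d ^ k ∣ n} = (gcdk k m n).divisors := by
    ext d
    simp only [mem_filter, mem_Icc, Nat.mem_divisors, dvd_gcdk_iff hm0]
    constructor
    · rintro ⟨-, hd⟩
      exact ⟨hd, ne_zero_of_dvd_ne_zero hm0 ((dvd_gcdk_iff hm0).1 dvd_rfl).1⟩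
    · rintro ⟨hd, -⟩
      have hdm := Nat.le_of_dvd (by omega) hd.1
      have hd0 := Nat.pos_of_dvd_of_pos hd.1 (by omega)
      exact ⟨⟨by omega, by omega⟩, hd⟩
  rw [← sum_filter, hdiv, sum_divisors_moebius]

lemma card_filter_dvd_Icc (N d : ℕ) : #{m ∈ Icc 1 N | d ∣ m} = N / d := by
  rw [← Nat.Ioc_filter_dvd_card_eq_div N d]
  rfl

lemma card_filter_gcdk_eq_one (k N : ℕ) :
    (#{mn ∈ Icc 1 N ×ˢ Icc 1 N | gcdk k mn.1 mn.2 = 1} : ℤ)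
      = ∑ d ∈ Icc 1 N, μ d * (N / d : ℕ) * (N / d ^ k : ℕ) := by
  calc (#{mn ∈ Icc 1 N ×ˢ Icc 1 N | gcdk k mn.1 mn.2 = 1} : ℤ)
      = ∑ mn ∈ Icc 1 N ×ˢ Icc 1 N, ∑ d ∈ Icc 1 N,
          if d ∣ mn.1 ∧ d ^ k ∣ mn.2 then μ d else 0 := by
        rw [natCast_card_filter]
        refine sum_congr rfl fun mn hmn => ?_
        exact (sum_Icc_moebius_eq_ite_gcdk_eq_one k N (mem_product.1 hmn).1 mn.2).symm
    _ = ∑ d ∈ Icc 1 N, μ d * #{mn ∈ Icc 1 N ×ˢ Icc 1 N | d ∣ mn.1 ∧ d ^ k ∣ mn.2} := by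
        rw [sum_comm]
        simp only [← sum_filter, sum_const, nsmul_eq_mul, mul_comm]
    _ = ∑ d ∈ Icc 1 N, μ d * (N / d : ℕ) * (N / d ^ k : ℕ) := by
        refine sum_congr rfl fun d _ => ?_
        rw [filter_product (fun m => d ∣ m) (fun n => d ^ k ∣ n), card_product,
          card_filter_dvd_Icc, card_filter_dvd_Icc, Nat.cast_mul, mul_assoc]

lemma abs_floor_mul_floor_sub_mul_le {K : Type*} [Field K] [LinearOrder K] [IsStrictOrderedRing K]
    [FloorSemiring K] {a b : K} (ha : 0 ≤ a) (hb : 0 ≤ b) :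
    |(⌊a⌋₊ * ⌊b⌋₊ : K) - a * b| ≤ a + b := by
  have ha₁ := Nat.floor_le ha
  have ha₂ := Nat.lt_floor_add_one a
  have hb₁ := Nat.floor_le hb
  have hb₂ := Nat.lt_floor_add_one b
  have ha₀ : (0 : K) ≤ ⌊a⌋₊ := Nat.cast_nonneg _
  rw [abs_le]
  constructor <;> nlinarith

lemma sum_Icc_inv_le_one_add_log (N : ℕ) : ∑ d ∈ Icc 1 N, (d : ℝ)⁻¹ ≤ 1 + Real.log N := by
  have h := harmonic_le_one_add_log N
  rw [harmonic_eq_sum_Icc] at h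
  push_cast at h
  exact h

lemma abs_sum_moebius_floor_mul_floor_sub_le {k : ℕ} (hk : 1 ≤ k) {x : ℝ} (hx : 1 ≤ x) :
    |∑ d ∈ Icc 1 ⌊x⌋₊, (μ d : ℝ) * ⌊x / d⌋₊ * ⌊x / d ^ k⌋₊
      - x ^ 2 * ∑ d ∈ Icc 1 ⌊x⌋₊, (μ d : ℝ) / d ^ (k + 1)| ≤ 2 * x * (1 + Real.log x) := by
  have hterm : ∀ d ∈ Icc 1 ⌊x⌋₊, |(μ d : ℝ) * ⌊x / d⌋₊ * ⌊x / d ^ k⌋₊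
      - x ^ 2 * ((μ d : ℝ) / d ^ (k + 1))| ≤ 2 * x * (d : ℝ)⁻¹ := by
    intro d hd
    have hd1 : (1 : ℝ) ≤ d := by exact_mod_cast (mem_Icc.1 hd).1
    have hdk : x / d ^ k ≤ x / d :=
      div_le_div_of_nonneg_left (by linarith) (by linarith) (le_self_pow₀ hd1 (by omega))
    have hμ : |(μ d : ℝ)| ≤ 1 := by exact_mod_cast ArithmeticFunction.abs_moebius_le_one
    have hfloor := abs_floor_mul_floor_sub_mul_le (a := x / d) (b := x / d ^ k)
      (by positivity) (by positivity)
    calc |(μ d : ℝ) * ⌊x / d⌋₊ * ⌊x / d ^ k⌋₊ - x ^ 2 * ((μ d : ℝ) / d ^ (k + 1))|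
        = |(μ d : ℝ)| * |(⌊x / d⌋₊ * ⌊x / d ^ k⌋₊ : ℝ) - x / d * (x / d ^ k)| := by
          rw [← abs_mul]; congr 1; field_simp; ring
      _ ≤ 1 * (x / d + x / d ^ k) := mul_le_mul hμ hfloor (abs_nonneg _) zero_le_one
      _ ≤ 2 * x * (d : ℝ)⁻¹ := by rw [mul_assoc, ← div_eq_mul_inv]; linarith
  have hlog : Real.log ⌊x⌋₊ ≤ Real.log x := by
    rcases Nat.eq_zero_or_pos ⌊x⌋₊ with h | h
    · rw [h, Nat.cast_zero, Real.log_zero]; exact Real.log_nonneg hx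
    · exact Real.log_le_log (by exact_mod_cast h) (Nat.floor_le (by linarith))
  calc _ = |∑ d ∈ Icc 1 ⌊x⌋₊, ((μ d : ℝ) * ⌊x / d⌋₊ * ⌊x / d ^ k⌋₊
        - x ^ 2 * ((μ d : ℝ) / d ^ (k + 1)))| := by rw [mul_sum, sum_sub_distrib]
    _ ≤ ∑ d ∈ Icc 1 ⌊x⌋₊, 2 * x * (d : ℝ)⁻¹ := (abs_sum_le_sum_abs _ _).trans (sum_le_sum hterm)
    _ ≤ 2 * x * (1 + Real.log x) := by
      rw [← mul_sum]
      gcongr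
      exact (sum_Icc_inv_le_one_add_log _).trans (by linarith)

lemma tsum_inv_sq_le_two : ∑' d : ℕ, ((d : ℝ) ^ 2)⁻¹ ≤ 2 := by
  have h : ∑' d : ℕ, ((d : ℝ) ^ 2)⁻¹ = Real.pi ^ 2 / 6 := by
    simpa only [one_div] using hasSum_zeta_two.tsum_eq
  nlinarith [h, Real.pi_lt_d2, Real.pi_pos]

lemma abs_tsum_sub_sum_Icc_le {f : ℕ → ℝ} (hf : ∀ d, |f d| ≤ ((d : ℝ) ^ 3)⁻¹) {N : ℕ}
    (hN : N ≠ 0) : |∑' d, f d - ∑ d ∈ Icc 1 N, f d| ≤ 2 / N := by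
  set s : Set ℕ := (↑(Icc 1 N))ᶜ
  have hsummable : Summable f :=
    .of_norm_bounded (Real.summable_nat_pow_inv.mpr (by norm_num)) hf
  -- For `d > N`, `d⁻³ ≤ N⁻¹ d⁻²`.
  have htail : ∀ d, ‖s.indicator f d‖ ≤ (N : ℝ)⁻¹ * ((d : ℝ) ^ 2)⁻¹ := by
    intro d
    by_cases hd : d ∈ s
    · rw [Set.indicator_of_mem hd, Real.norm_eq_abs]
      refine (hf d).trans ?_
      rcases Nat.eq_zero_or_pos d with rfl | hd0
      · simp
      have hNd : (N : ℝ) ≤ d := by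
        have : N < d := by simpa [s, mem_Icc, Nat.one_le_iff_ne_zero, hd0.ne'] using hd
        exact_mod_cast this.le
      rw [← mul_inv]
      gcongr
      calc (N : ℝ) * d ^ 2 ≤ d * d ^ 2 := by gcongr
        _ = (d : ℝ) ^ 3 := by ring
    · rw [Set.indicator_of_notMem hd, norm_zero]
      positivity
  have hsq : Summable fun d : ℕ => (N : ℝ)⁻¹ * ((d : ℝ) ^ 2)⁻¹ :=
    (Real.summable_nat_pow_inv.mpr one_lt_two).mul_left _
  rw [← hsummable.sum_add_tsum_compl, add_sub_cancel_left, _root_.tsum_subtype, ← Real.norm_eq_abs]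
  calc ‖∑' d, s.indicator f d‖ ≤ ∑' d : ℕ, (N : ℝ)⁻¹ * ((d : ℝ) ^ 2)⁻¹ :=
        tsum_of_norm_bounded hsq.hasSum htail
    _ ≤ (N : ℝ)⁻¹ * 2 := by rw [tsum_mul_left]; gcongr; exact tsum_inv_sq_le_two
    _ = 2 / N := by ring

lemma riemannZeta_inv_eq_tsum_moebius {k : ℕ} (hk : 1 ≤ k) :
    (riemannZeta (k + 1))⁻¹ = ((∑' d : ℕ, (μ d : ℝ) / (d : ℝ) ^ (k + 1) : ℝ) : ℂ) := by
  have hs : 1 < ((k : ℂ) + 1).re := by simpa using (by omega : 0 < k)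
  have h := ArithmeticFunction.LSeries_zeta_mul_Lseries_moebius hs
  rw [ArithmeticFunction.LSeries_zeta_eq_riemannZeta hs] at h
  rw [inv_eq_of_mul_eq_one_right h, LSeries, Complex.ofReal_tsum]
  refine tsum_congr fun d => ?_
  rcases eq_or_ne d 0 with rfl | hd
  · simp
  · rw [LSeries.term_of_ne_zero hd, ← Nat.cast_add_one, Complex.cpow_natCast]
    norm_cast

lemma abs_moebius_div_pow_le {k : ℕ} (hk : 2 ≤ k) (d : ℕ) :
    |(μ d : ℝ) / (d : ℝ) ^ (k + 1)| ≤ ((d : ℝ) ^ 3)⁻¹ := by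
  rcases Nat.eq_zero_or_pos d with rfl | hd
  · simp
  have hμ : |(μ d : ℝ)| ≤ 1 := by exact_mod_cast ArithmeticFunction.abs_moebius_le_one
  rw [abs_div, abs_pow, Nat.abs_cast, div_eq_mul_inv, ← one_mul ((d : ℝ) ^ 3)⁻¹]
  gcongr
  · exact_mod_cast hd
  · omega

lemma abs_card_gcdk_eq_one_sub_le {k : ℕ} (hk : 2 ≤ k) {x : ℝ} (hx : 2 ≤ x) :
    |(#{mn ∈ Icc 1 ⌊x⌋₊ ×ˢ Icc 1 ⌊x⌋₊ | gcdk k mn.1 mn.2 = 1} : ℝ)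
      - x ^ 2 * ∑' d : ℕ, (μ d : ℝ) / (d : ℝ) ^ (k + 1)| ≤ 2 * x * Real.log x + 6 * x := by
  have hcount : (#{mn ∈ Icc 1 ⌊x⌋₊ ×ˢ Icc 1 ⌊x⌋₊ | gcdk k mn.1 mn.2 = 1} : ℝ)
      = ∑ d ∈ Icc 1 ⌊x⌋₊, (μ d : ℝ) * ⌊x / d⌋₊ * ⌊x / d ^ k⌋₊ := by
    rw [← Int.cast_natCast, card_filter_gcdk_eq_one]
    simp only [Int.cast_sum, Int.cast_mul, Int.cast_natCast, ← Nat.cast_pow, Nat.floor_div_natCast]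
  have hpartial :=
    abs_sum_moebius_floor_mul_floor_sub_le (by omega : 1 ≤ k) (by linarith : 1 ≤ x)
  have hN0 : 0 < ⌊x⌋₊ := Nat.floor_pos.2 (by linarith)
  have htail := abs_tsum_sub_sum_Icc_le (abs_moebius_div_pow_le hk) hN0.ne'
  rw [hcount]
  set S := ∑ d ∈ Icc 1 ⌊x⌋₊, (μ d : ℝ) * ⌊x / d⌋₊ * ⌊x / d ^ k⌋₊
  set P := ∑ d ∈ Icc 1 ⌊x⌋₊, (μ d : ℝ) / (d : ℝ) ^ (k + 1)
  set Z := ∑' d : ℕ, (μ d : ℝ) / (d : ℝ) ^ (k + 1)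
  have hN : x / 2 ≤ ⌊x⌋₊ := by linarith [Nat.lt_floor_add_one x]
  have hx2N : x ^ 2 * (2 / ⌊x⌋₊) ≤ 4 * x := by
    rw [mul_div_assoc', div_le_iff₀ (by positivity)]
    nlinarith
  calc |S - x ^ 2 * Z| = |(S - x ^ 2 * P) - x ^ 2 * (Z - P)| := by ring_nf
    _ ≤ |S - x ^ 2 * P| + x ^ 2 * |Z - P| :=
      (abs_sub _ _).trans_eq (by rw [abs_mul, abs_sq])
    _ ≤ 2 * x * (1 + Real.log x) + x ^ 2 * (2 / ⌊x⌋₊) := by gcongr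
    _ ≤ 2 * x * Real.log x + 6 * x := by linarith

theorem stmt11 (k : ℕ) (hk : 2 ≤ k) :
    ∃ C > 0, ∀ x : ℝ, 2 ≤ x →
      ‖((((Finset.Icc 1 ⌊x⌋₊ ×ˢ Finset.Icc 1 ⌊x⌋₊).filter
            (fun mn => gcdk k (mn.1 : ℤ) (mn.2 : ℤ) = 1)).card : ℂ)
          - (x : ℂ) ^ 2 / riemannZeta ((k : ℂ) + 1))‖ ≤ C * x * Real.log x := by
  refine ⟨14, by norm_num, fun x hx => ?_⟩
  have hlog : 1 / 2 ≤ Real.log x :=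
    (Real.log_two_gt_d9.le.trans' (by norm_num)).trans (Real.log_le_log two_pos hx)
  rw [div_eq_mul_inv, riemannZeta_inv_eq_tsum_moebius (by omega)]
  calc _ = |(#{mn ∈ Icc 1 ⌊x⌋₊ ×ˢ Icc 1 ⌊x⌋₊ | gcdk k mn.1 mn.2 = 1} : ℝ)
        - x ^ 2 * ∑' d : ℕ, (μ d : ℝ) / (d : ℝ) ^ (k + 1)| := by
        rw [← Real.norm_eq_abs, ← Complex.norm_real, Complex.ofReal_sub, Complex.ofReal_mul,
          Complex.ofReal_pow, Complex.ofReal_natCast]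
    _ ≤ 2 * x * Real.log x + 6 * x := abs_card_gcdk_eq_one_sub_le hk hx
    _ ≤ 14 * x * Real.log x := by nlinarith
end

section
/- For nonzero integers a, b and k ≥ 1: gcd_k(a, b) = 2 if and only if 2 ∣ a, 2^k ∣ b, and gcd_k(a/2, b/2^k) = 1. -/
lemma gcdk_ne (k : ℕ) (a b : ℤ) :
    Set.Nonempty {d : ℕ | (d : ℤ) ∣ a ∧ (d : ℤ) ^ k ∣ b} := ⟨1, by simp⟩

theorem stmt13 (k : ℕ) (hk : 1 ≤ k) (a b : ℤ) (ha : a ≠ 0) (hb : b ≠ 0) :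
    gcdk k a b = 2 ↔ 2 ∣ a ∧ 2 ^ k ∣ b ∧ gcdk k (a / 2) (b / 2 ^ k) = 1 := by
  unfold gcdk
  constructor
  · intro h
    have hmem : (2 : ℕ) ∈ {d : ℕ | (d : ℤ) ∣ a ∧ (d : ℤ) ^ k ∣ b} := by
      rw [← h]; exact Nat.sSup_mem (gcdk_ne k a b) (gcdk_bdd k a b ha)
    obtain ⟨h2a, h2b⟩ := hmem
    push_cast at h2a h2b
    have ha2 : a / 2 ≠ 0 := by
      intro h0
      have := Int.ediv_mul_cancel h2a
      rw [h0] at this; simp at this; exact ha this.symm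
    refine ⟨h2a, h2b, ?_⟩
    apply le_antisymm
    · apply csSup_le (gcdk_ne k _ _)
      intro d hd
      by_contra hd2
      push_neg at hd2
      have hmem' : (2 * d : ℕ) ∈ {d : ℕ | (d : ℤ) ∣ a ∧ (d : ℤ) ^ k ∣ b} := by
        constructor
        · push_cast
          calc (2 * (d:ℤ)) ∣ 2 * (a / 2) := mul_dvd_mul_left 2 hd.1
          _ = a := Int.mul_ediv_cancel' h2a
        · push_cast
          rw [mul_pow]
          calc (2:ℤ) ^ k * (d:ℤ) ^ k ∣ 2 ^ k * (b / 2 ^ k) := mul_dvd_mul_left _ hd.2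
          _ = b := Int.mul_ediv_cancel' h2b
      have := le_csSup (gcdk_bdd k a b ha) hmem'
      rw [h] at this
      omega
    · exact le_csSup (gcdk_bdd k _ _ ha2) (by simp)
  · rintro ⟨h2a, h2b, h1⟩
    apply le_antisymm
    · apply csSup_le (gcdk_ne k a b)
      intro d hd
      by_contra hd3
      push_neg at hd3
      have ha2 : a / 2 ≠ 0 := by
        intro h0
        have := Int.ediv_mul_cancel h2a
        rw [h0] at this; simp at this; exact ha this.symm
      rcases Nat.even_or_odd d with he | ho
      · obtain ⟨e, rfl⟩ := he
        have hmem' : e ∈ {d : ℕ | (d : ℤ) ∣ a / 2 ∧ (d : ℤ) ^ k ∣ b / 2 ^ k} := by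
          constructor
          · obtain ⟨m, hm⟩ := hd.1
            refine ⟨m, ?_⟩
            rw [hm]
            push_cast
            rw [show ((e:ℤ) + e) * m = 2 * ((e:ℤ) * m) by ring]
            exact Int.mul_ediv_cancel_left _ two_ne_zero
          · obtain ⟨m, hm⟩ := hd.2
            refine ⟨m, ?_⟩
            rw [hm]
            push_cast
            rw [(by ring : (((e:ℤ) + e) ^ k) * m = 2 ^ k * ((e:ℤ) ^ k * m))]
            exact Int.mul_ediv_cancel_left _ (by positivity)
        have := le_csSup (gcdk_bdd k _ _ ha2) hmem'
        rw [h1] at this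
        omega
      · have hco : IsCoprime (d : ℤ) 2 := by
          rw [Int.isCoprime_iff_gcd_eq_one]
          have h2nd : ¬ (2 ∣ d) := by rcases ho with ⟨j, rfl⟩; omega
          have : Nat.gcd d 2 = 1 :=
            Nat.coprime_comm.1 ((Nat.Prime.coprime_iff_not_dvd Nat.prime_two).2 h2nd)
          simpa [Int.gcd] using this
        have hmem' : d ∈ {d : ℕ | (d : ℤ) ∣ a / 2 ∧ (d : ℤ) ^ k ∣ b / 2 ^ k} := by
          constructor
          · have : (d:ℤ) ∣ 2 * (a / 2) := by
              rw [Int.mul_ediv_cancel' h2a]; exact hd.1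
            exact hco.dvd_of_dvd_mul_left this
          · have : (d:ℤ) ^ k ∣ 2 ^ k * (b / 2 ^ k) := by
              rw [Int.mul_ediv_cancel' h2b]; exact hd.2
            exact (hco.pow).dvd_of_dvd_mul_left this
        have := le_csSup (gcdk_bdd k _ _ ha2) hmem'
        rw [h1] at this
        omega
    · apply le_csSup (gcdk_bdd k a b ha)
      exact ⟨by exact_mod_cast h2a, by push_cast; exact h2b⟩
end
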